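/- arXiv:1611.06589 — 4 statements merged into one kernel-verified Lean document; each statement's English description precedes it below -/
import Mathlib

section
/- There exist four agents with additive valuations on [0,1] and an allocation that is proportional on the complete graph K_4 (i.e., globally proportional: each agent values her piece at least 1/4) but is not locally proportional on the 4-cycle C_4. -/
/-!
Valuations are only required to be additive on arbitrary disjoint subsets, which Lebesgue
measure is not, so the agents' valuations are built from point masses. Cut `[0,1]` into four
quarters, agent `i` receiving the `i`-th one. Agents `1, 2, 3` put all their mass inside their
own quarter. Agent `0` puts mass `1/4` inside her own quarter and `3/8` inside each of the
quarters of her `C₄`-neighbours `1` and `3`: she gets exactly `1/4`, but the neighbours' average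
is `3/8`.
-/

open Set Function

variable {α : Type*}

def IsAdditiveValuation (v : Set α → ℝ) : Prop :=
  (∀ X, 0 ≤ v X) ∧ ∀ X Y, Disjoint X Y → v (X ∪ Y) = v X + v Y

namespace IsAdditiveValuation

variable {v w : Set α → ℝ}

theorem add (hv : IsAdditiveValuation v) (hw : IsAdditiveValuation w) :
    IsAdditiveValuation (v + w) :=
  ⟨fun X => add_nonneg (hv.1 X) (hw.1 X), fun X Y h => by
    simp only [Pi.add_apply, hv.2 X Y h, hw.2 X Y h]; ring⟩

theorem const_smul {c : ℝ} (hc : 0 ≤ c) (hv : IsAdditiveValuation v) :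
    IsAdditiveValuation (c • v) :=
  ⟨fun X => mul_nonneg hc (hv.1 X), fun X Y h => by
    simp only [Pi.smul_apply, smul_eq_mul, hv.2 X Y h, mul_add]⟩

end IsAdditiveValuation

noncomputable def pointMass (p : α) (X : Set α) : ℝ := X.indicator 1 p

theorem isAdditiveValuation_pointMass (p : α) : IsAdditiveValuation (pointMass p) :=
  ⟨fun _ => indicator_nonneg (fun _ _ => zero_le_one) p, fun _ _ h => by
    simp only [pointMass, indicator_union_of_disjoint h]⟩

def intervalPartition [Preorder α] (a b c d e : α) : Fin 4 → Set α :=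
  ![Ico a b, Ico b c, Ico c d, Icc d e]

section intervalPartition

variable [LinearOrder α] {a b c d e : α}

theorem pairwise_disjoint_intervalPartition (hb : b ≤ c) (hc : c ≤ d) :
    Pairwise (Disjoint on (intervalPartition a b c d e)) := by
  intro i j hij
  rw [onFun, Set.disjoint_left]
  intro x hi hj
  fin_cases i <;> fin_cases j <;> simp_all [intervalPartition] <;> order

theorem iUnion_intervalPartition (ha : a ≤ b) (hb : b ≤ c) (hc : c ≤ d) (hd : d ≤ e) :
    ⋃ i, intervalPartition a b c d e i = Icc a e := by
  rw [← Ico_union_Icc_eq_Icc ((ha.trans hb).trans hc) hd, ← Ico_union_Ico_eq_Ico (ha.trans hb) hc,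
    ← Ico_union_Ico_eq_Ico ha hb]
  ext x
  simp [Fin.exists_fin_succ, intervalPartition, or_assoc]

end intervalPartition

namespace C4Counterexample

noncomputable def valuation : Fin 4 → Set ℝ → ℝ :=
  ![(1 / 4 : ℝ) • pointMass 0 + (3 / 8 : ℝ) • pointMass (1 / 4) + (3 / 8 : ℝ) • pointMass (3 / 4),
    pointMass (1 / 4), pointMass (1 / 2), pointMass (3 / 4)]

def allocation : Fin 4 → Set ℝ := intervalPartition 0 (1 / 4) (1 / 2) (3 / 4) 1

theorem isAdditiveValuation_valuation (i : Fin 4) : IsAdditiveValuation (valuation i) := by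
  have hp := isAdditiveValuation_pointMass (α := ℝ)
  fin_cases i
  · exact (((hp 0).const_smul (by norm_num)).add ((hp _).const_smul (by norm_num))).add
      ((hp _).const_smul (by norm_num))
  all_goals exact hp _

theorem valuation_Icc (i : Fin 4) : valuation i (Icc 0 1) = 1 := by
  fin_cases i <;> norm_num [valuation, pointMass, indicator_apply]

theorem quarter_le_valuation_allocation_self (i : Fin 4) : 1 / 4 ≤ valuation i (allocation i) := by
  fin_cases i <;> norm_num [valuation, allocation, pointMass, indicator_apply, intervalPartition]

theorem valuation_zero_lt_neighbour_average :
    valuation 0 (allocation 0) < (valuation 0 (allocation 1) + valuation 0 (allocation 3)) / 2 := by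
  norm_num [valuation, allocation, pointMass, indicator_apply, intervalPartition,
    Matrix.cons_val_three]

end C4Counterexample

/-- There exist four agents with nonnegative, additive valuations normalized to `1`
on `[0,1]`, and an allocation (a partition of `[0,1]`) that is globally proportional
(each agent values her own piece at least `1/4`) but not locally proportional on the
4-cycle `C₄`, where the neighbors of agent `i` in `Fin 4` are `i+1` and `i-1`. -/
theorem global_proportional_not_locally_proportional_C4 :
    ∃ (v : Fin 4 → Set ℝ → ℝ) (A : Fin 4 → Set ℝ),
      (∀ i X, 0 ≤ v i X) ∧
      (∀ i X Y, Disjoint X Y → v i (X ∪ Y) = v i X + v i Y) ∧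
      (∀ i, v i (Set.Icc (0:ℝ) 1) = 1) ∧
      (∀ i j, i ≠ j → Disjoint (A i) (A j)) ∧
      (⋃ i, A i) = Set.Icc (0:ℝ) 1 ∧
      (∀ i, (1/4 : ℝ) ≤ v i (A i)) ∧
      ¬ (∀ i : Fin 4, (v i (A (i + 1)) + v i (A (i - 1))) / 2 ≤ v i (A i)) :=
  ⟨C4Counterexample.valuation, C4Counterexample.allocation,
    fun i => (C4Counterexample.isAdditiveValuation_valuation i).1,
    fun i => (C4Counterexample.isAdditiveValuation_valuation i).2,
    C4Counterexample.valuation_Icc,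
    fun _ _ hij => pairwise_disjoint_intervalPartition (by norm_num) (by norm_num) hij,
    iUnion_intervalPartition (by norm_num) (by norm_num) (by norm_num) (by norm_num),
    C4Counterexample.quarter_le_valuation_allocation_self,
    fun h => (h 0).not_gt C4Counterexample.valuation_zero_lt_neighbour_average⟩
end

section
/- For any two distinct connected undirected graphs G and H on the same vertex set of n nodes, there exists a profile of nonnegative additive valuations on [0,1] and an allocation that is locally proportional on G but not locally proportional on H. -/
open Finset in
lemma master_lemma
    {V : Type*} [Fintype V] [DecidableEq V]
    (G H : SimpleGraph V) [DecidableRel G.Adj] [DecidableRel H.Adj]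
    (b : V) (w : V → V → ℝ)
    (hw0 : ∀ i j, 0 ≤ w i j) (hw1 : ∀ i, ∑ j, w i j = 1)
    (hGw : ∀ i, (∑ j ∈ G.neighborFinset i, w i j) / (G.degree i : ℝ) ≤ w i i)
    (hHw : ¬ ((∑ j ∈ H.neighborFinset b, w b j) / (H.degree b : ℝ) ≤ w b b)) :
    ∃ (v : V → Set ℝ → ℝ) (A : V → Set ℝ),
      (∀ i X, 0 ≤ v i X) ∧
      (∀ i X Y, Disjoint X Y → v i (X ∪ Y) = v i X + v i Y) ∧
      (∀ i, v i (Set.Icc (0:ℝ) 1) = 1) ∧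
      (∀ i j, i ≠ j → Disjoint (A i) (A j)) ∧
      (⋃ i, A i) = Set.Icc (0:ℝ) 1 ∧
      (∀ i, (∑ j ∈ G.neighborFinset i, v i (A j)) / (G.degree i : ℝ) ≤ v i (A i)) ∧
      ¬ (∀ i, (∑ j ∈ H.neighborFinset i, v i (A j)) / (H.degree i : ℝ) ≤ v i (A i)) := by
  classical
  have hn : 0 < Fintype.card V := Fintype.card_pos_iff.mpr ⟨b⟩
  set n := Fintype.card V with hn_def
  let e := Fintype.equivFin V
  let p : V → ℝ := fun j => ((e j : ℕ) : ℝ) / n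
  have hnR : (0:ℝ) < n := by exact_mod_cast hn
  have hpmem : ∀ j, p j ∈ Set.Icc (0:ℝ) 1 := by
    intro j
    constructor
    · positivity
    · rw [div_le_one hnR]
      exact_mod_cast le_of_lt (e j).2
  have hpinj : Function.Injective p := by
    intro j k h
    have : ((e j : ℕ) : ℝ) = ((e k : ℕ) : ℝ) := by
      simp only [p] at h; exact (div_left_inj' hnR.ne').mp h
    have : (e j : ℕ) = (e k : ℕ) := by exact_mod_cast this
    exact e.injective (Fin.ext this)
  let Q : Set ℝ := {x | ∃ m, m ≠ b ∧ p m = x}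
  let A : V → Set ℝ := fun j => if j = b then Set.Icc 0 1 \ Q else {p j}
  have memA : ∀ k j, p k ∈ A j ↔ k = j := by
    intro k j
    by_cases hj : j = b
    · subst hj
      simp only [A, if_pos rfl, Set.mem_diff]
      constructor
      · rintro ⟨-, hq⟩
        by_contra hk
        exact hq ⟨k, hk, rfl⟩
      · rintro rfl
        refine ⟨hpmem _, ?_⟩
        rintro ⟨m, hm, hpm⟩
        exact hm (hpinj hpm)
    · simp only [A, if_neg hj, Set.mem_singleton_iff]
      exact ⟨fun h => hpinj h, fun h => by rw [h]⟩
  let v : V → Set ℝ → ℝ := fun i X => ∑ j, if p j ∈ X then w i j else 0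
  have vA : ∀ i j, v i (A j) = w i j := by
    intro i j
    have : ∀ k, (if p k ∈ A j then w i k else 0) = (if k = j then w i k else 0) := by
      intro k; simp [memA k j]
    simp only [v, this]
    simp [Finset.sum_ite_eq']
  refine ⟨v, A, ?_, ?_, ?_, ?_, ?_, ?_, ?_⟩
  · intro i X
    apply Finset.sum_nonneg
    intro j _
    split
    · exact hw0 i j
    · exact le_rfl
  · intro i X Y hd
    simp only [v, ← Finset.sum_add_distrib]
    apply Finset.sum_congr rfl
    intro j _
    by_cases hX : p j ∈ X <;> by_cases hY : p j ∈ Y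
    · exact absurd (Set.disjoint_left.mp hd hX) (fun h => h hY)
    all_goals simp [Set.mem_union, hX, hY]
  · intro i
    simp only [v]
    exact (Finset.sum_congr rfl fun j _ => if_pos (hpmem j)).trans (hw1 i)
  · intro i j hij
    rw [Set.disjoint_left]
    intro x hxi hxj
    by_cases hi : i = b
    · subst hi
      simp only [A, if_pos rfl, Set.mem_diff] at hxi
      simp only [A, if_neg (Ne.symm hij), Set.mem_singleton_iff] at hxj
      exact hxi.2 ⟨j, Ne.symm hij, hxj.symm⟩
    · simp only [A, if_neg hi, Set.mem_singleton_iff] at hxi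
      by_cases hj : j = b
      · subst hj
        simp only [A, if_pos rfl, Set.mem_diff] at hxj
        exact hxj.2 ⟨i, hi, hxi.symm⟩
      · simp only [A, if_neg hj, Set.mem_singleton_iff] at hxj
        exact hij (hpinj (hxi.symm.trans hxj : p i = p j))
  · ext x
    constructor
    · rintro ⟨_, ⟨i, rfl⟩, hx⟩
      by_cases hi : i = b
      · subst hi; simp only [A, if_pos rfl] at hx; exact hx.1
      · simp only [A, if_neg hi, Set.mem_singleton_iff] at hx
        rw [hx]; exact hpmem i
    · intro hx
      by_cases hq : x ∈ Q
      · obtain ⟨m, hm, rfl⟩ := hq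
        exact Set.mem_iUnion.mpr ⟨m, by simp only [A, if_neg hm]; rfl⟩
      · exact Set.mem_iUnion.mpr ⟨b, by simp only [A, if_pos rfl]; exact ⟨hx, hq⟩⟩
  · intro i
    have : ∑ j ∈ G.neighborFinset i, v i (A j) = ∑ j ∈ G.neighborFinset i, w i j :=
      Finset.sum_congr rfl fun j _ => vA i j
    rw [this, vA]; exact hGw i
  · intro hc
    apply hHw
    have := hc b
    rwa [show (∑ j ∈ H.neighborFinset b, v b (A j)) = ∑ j ∈ H.neighborFinset b, w b j from
      Finset.sum_congr rfl fun j _ => vA b j, vA] at this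

open Finset in
lemma sum_delta {V : Type*} [Fintype V] [DecidableEq V] (T : Finset V) (a : V) :
    (∑ j ∈ T, if j = a then (1:ℝ) else 0) = if a ∈ T then 1 else 0 :=
  Finset.sum_ite_eq' T a fun _ => (1:ℝ)

lemma caseB_x (dr gr kr : ℝ) (hdr : 0 < dr) (hgr : 0 < gr) (hkr : 0 ≤ kr)
    (hkg : kr < gr) :
    ∃ x : ℝ, 0 ≤ x ∧ x ≤ 1 ∧
      x * 1 + (1 - x) / dr * dr = 1 ∧
      (x * 0 + (1 - x) / dr * kr) / gr ≤ x ∧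
      x < (x * 0 + (1 - x) / dr * dr) / dr := by
  have hD : (0:ℝ) < dr * gr + kr := by positivity
  have hDne : dr * gr + kr ≠ 0 := ne_of_gt hD
  have hdrne : dr ≠ 0 := ne_of_gt hdr
  have hgrne : gr ≠ 0 := ne_of_gt hgr
  refine ⟨kr / (dr * gr + kr), by positivity, ?_, ?_, ?_, ?_⟩
  · rw [div_le_one hD]; nlinarith
  · field_simp
    ring
  · apply le_of_eq
    field_simp
    ring
  · have hR : (kr / (dr * gr + kr) * 0 + (1 - kr / (dr * gr + kr)) / dr * dr) / dr
        = gr / (dr * gr + kr) := by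
      field_simp
      ring
    rw [hR, div_lt_div_iff₀ hD hD]
    nlinarith


/-- For any two distinct connected undirected graphs `G` and `H` on the same vertex
set, there is a profile of nonnegative additive valuations normalized to `1` on
`[0,1]`, and an allocation, that is locally proportional on `G` but not on `H`. -/
theorem locally_proportional_on_G_not_on_H
    {V : Type*} [Fintype V] [DecidableEq V]
    (G H : SimpleGraph V) [DecidableRel G.Adj] [DecidableRel H.Adj]
    (hG : G.Connected) (hH : H.Connected) (hne : G ≠ H) :
    ∃ (v : V → Set ℝ → ℝ) (A : V → Set ℝ),
      (∀ i X, 0 ≤ v i X) ∧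
      (∀ i X Y, Disjoint X Y → v i (X ∪ Y) = v i X + v i Y) ∧
      (∀ i, v i (Set.Icc (0:ℝ) 1) = 1) ∧
      (∀ i j, i ≠ j → Disjoint (A i) (A j)) ∧
      (⋃ i, A i) = Set.Icc (0:ℝ) 1 ∧
      (∀ i, (∑ j ∈ G.neighborFinset i, v i (A j)) / (G.degree i : ℝ) ≤ v i (A i)) ∧
      ¬ (∀ i, (∑ j ∈ H.neighborFinset i, v i (A j)) / (H.degree i : ℝ) ≤ v i (A i)) := by
  classical
  have hdiff : ∃ a b, ¬ (G.Adj a b ↔ H.Adj a b) := by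
    by_contra h
    push_neg at h
    apply hne
    ext a b
    exact h a b
  obtain ⟨a, b, hab⟩ := hdiff
  by_cases hGab : G.Adj a b
  · -- edge in G, not in H
    have hHab : ¬ H.Adj a b := fun h => hab ⟨fun _ => h, fun _ => hGab⟩
    have hab' : a ≠ b := G.ne_of_adj hGab
    have hdH : 0 < H.degree b := by
      rw [H.degree_pos_iff_exists_adj b]
      obtain ⟨W⟩ := hH.preconnected b a
      cases W with
      | nil => exact absurd rfl (Ne.symm hab')
      | cons h _ => exact ⟨_, h⟩
    have hdG : 0 < G.degree b := by
      rw [G.degree_pos_iff_exists_adj b]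
      exact ⟨a, hGab.symm⟩
    set S := H.neighborFinset b with hS
    have hbS : b ∉ S := by simp [hS]
    have haS : a ∉ S := by
      simp only [hS, SimpleGraph.mem_neighborFinset]
      exact fun h => hHab h.symm
    have haG : a ∈ G.neighborFinset b := by
      rw [SimpleGraph.mem_neighborFinset]; exact hGab.symm
    set k := (S ∩ G.neighborFinset b).card with hk_def
    have hk : k < G.degree b := by
      rw [← G.card_neighborFinset_eq_degree]
      apply Finset.card_lt_card
      constructor
      · exact Finset.inter_subset_right
      · intro hsub
        exact haS (Finset.mem_inter.mp (hsub haG)).1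
    set dr : ℝ := (H.degree b : ℝ) with hdr
    set gr : ℝ := (G.degree b : ℝ) with hgr
    set kr : ℝ := (k : ℝ) with hkr
    have hdr0 : 0 < dr := by rw [hdr]; exact_mod_cast hdH
    have hgr0 : 0 < gr := by rw [hgr]; exact_mod_cast hdG
    have hkr0 : 0 ≤ kr := by rw [hkr]; positivity
    have hkg : kr < gr := by rw [hkr, hgr]; exact_mod_cast hk
    obtain ⟨x, hx0, hx1, hxnorm, hxG, hxH⟩ := caseB_x dr gr kr hdr0 hgr0 hkr0 hkg
    have h1xnn : 0 ≤ (1 - x) / dr := div_nonneg (by linarith) hdr0.le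
    set w : V → V → ℝ := fun i j =>
      if i = b then x * (if j = b then 1 else 0) + (1 - x) / dr * (if j ∈ S then 1 else 0)
      else (if j = i then 1 else 0) with hw_def
    have hScard : (S.card : ℝ) = dr := by
      rw [hdr, hS]
      exact_mod_cast congrArg Nat.cast (H.card_neighborFinset_eq_degree b)
    have sum_ind : ∀ (T : Finset V), (∑ j ∈ T, (if j ∈ S then (1:ℝ) else 0))
        = ((T ∩ S).card : ℝ) := by
      intro T
      rw [Finset.sum_ite_mem]
      simp
    have wbb : w b b = x := by
      simp [hw_def, hbS]
    have wdelta : ∀ i j, i ≠ b → w i j = if j = i then 1 else 0 := by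
      intro i j hi; simp [hw_def, hi]
    have hsum : ∀ T : Finset V, (∑ j ∈ T, w b j)
        = x * (if b ∈ T then 1 else 0) + (1 - x) / dr * ((T ∩ S).card : ℝ) := by
      intro T
      have hval : ∀ j, w b j
          = x * (if j = b then 1 else 0) + (1 - x) / dr * (if j ∈ S then 1 else 0) := by
        intro j; simp [hw_def]
      calc (∑ j ∈ T, w b j)
          = ∑ j ∈ T, (x * (if j = b then 1 else 0)
              + (1 - x) / dr * (if j ∈ S then 1 else 0)) :=
            Finset.sum_congr rfl fun j _ => hval j
        _ = x * (if b ∈ T then 1 else 0) + (1 - x) / dr * ((T ∩ S).card : ℝ) := by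
            rw [Finset.sum_add_distrib, ← Finset.mul_sum, ← Finset.mul_sum, sum_ind,
              sum_delta]
    apply master_lemma G H b w
    · intro i j
      by_cases hi : i = b
      · rw [hi]
        have hval : w b j
            = x * (if j = b then 1 else 0) + (1 - x) / dr * (if j ∈ S then 1 else 0) := by
          simp [hw_def]
        rw [hval]
        split_ifs <;> nlinarith
      · rw [wdelta i j hi]
        split_ifs <;> norm_num
    · intro i
      by_cases hi : i = b
      · rw [hi, hsum Finset.univ, if_pos (Finset.mem_univ b), Finset.univ_inter, hScard]
        exact hxnorm
      · rw [Finset.sum_congr rfl fun j (_ : j ∈ Finset.univ) => wdelta i j hi,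
          sum_delta, if_pos (Finset.mem_univ i)]
    · intro i
      by_cases hi : i = b
      · rw [hi, hsum (G.neighborFinset b), wbb]
        have hbG : b ∉ G.neighborFinset b := by simp
        rw [if_neg hbG]
        have hcard : ((G.neighborFinset b ∩ S).card : ℝ) = kr := by
          rw [Finset.inter_comm, hkr, hk_def]
        rw [hcard, ← hgr]
        exact hxG
      · rw [Finset.sum_congr rfl fun j (_ : j ∈ G.neighborFinset i) => wdelta i j hi,
          sum_delta, wdelta i i hi, if_pos rfl]
        have : i ∉ G.neighborFinset i := by simp
        rw [if_neg this, zero_div]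
        norm_num
    · rw [not_le, wbb, ← hS, hsum S, if_neg hbS, Finset.inter_self, hScard, ← hdr]
      exact hxH
  · -- edge in H, not in G
    have hHab : H.Adj a b := by
      by_contra h2
      exact hab ⟨fun g => absurd g hGab, fun h => absurd h h2⟩
    have hab' : a ≠ b := H.ne_of_adj hHab
    have haH : a ∈ H.neighborFinset b := by
      rw [SimpleGraph.mem_neighborFinset]; exact hHab.symm
    have haG : a ∉ G.neighborFinset b := by
      simp only [SimpleGraph.mem_neighborFinset]
      exact fun h => hGab h.symm
    have hdH : 0 < H.degree b := by
      rw [H.degree_pos_iff_exists_adj b]; exact ⟨a, hHab.symm⟩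
    set w : V → V → ℝ := fun i j =>
      if i = b then (if j = a then 1 else 0) else (if j = i then 1 else 0) with hw_def
    have wbb : w b b = 0 := by simp [hw_def, Ne.symm hab']
    have wb : ∀ j, w b j = if j = a then (1:ℝ) else 0 := by intro j; simp [hw_def]
    have wdelta : ∀ i j, i ≠ b → w i j = if j = i then 1 else 0 := by
      intro i j hi; simp [hw_def, hi]
    have hsum : ∀ T : Finset V, (∑ j ∈ T, w b j) = if a ∈ T then 1 else 0 := by
      intro T
      rw [Finset.sum_congr rfl fun j (_ : j ∈ T) => wb j, sum_delta]
    apply master_lemma G H b w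
    · intro i j
      simp only [hw_def]
      split_ifs <;> norm_num
    · intro i
      by_cases hi : i = b
      · rw [hi, hsum Finset.univ, if_pos (Finset.mem_univ a)]
      · rw [Finset.sum_congr rfl fun j (_ : j ∈ Finset.univ) => wdelta i j hi,
          sum_delta, if_pos (Finset.mem_univ i)]
    · intro i
      by_cases hi : i = b
      · rw [hi, hsum (G.neighborFinset b), wbb, if_neg haG, zero_div]
      · rw [Finset.sum_congr rfl fun j (_ : j ∈ G.neighborFinset i) => wdelta i j hi,
          sum_delta, wdelta i i hi, if_pos rfl]
        have : i ∉ G.neighborFinset i := by simp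
        rw [if_neg this, zero_div]
        norm_num
    · rw [not_le, wbb, hsum (H.neighborFinset b), if_pos haH]
      have hdr0 : (0:ℝ) < (H.degree b : ℝ) := by exact_mod_cast hdH
      positivity
end

section
/- In the lower-bound construction, if an allocation is locally envy-free on connected undirected graph G and j ∈ S_i has a path to i lying in S ∪ {i}, then the Lebesgue measure of j's piece is at least the Lebesgue measure of i's piece. -/
open MeasureTheory

lemma volume_ne_top_of_subset_Icc {s : Set ℝ} {a b : ℝ} (hs : s ⊆ Set.Icc a b) : volume s ≠ ⊤ :=
  (measure_lt_top_of_subset hs measure_Icc_lt_top.ne).ne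

lemma Relation.ReflTransGen.le_of_monotone {α β : Type*} [Preorder β] {r : α → α → Prop}
    {f : α → β} (hf : ∀ a b, r a b → f a ≤ f b) {a b : α} (h : Relation.ReflTransGen r a b) :
    f a ≤ f b :=
  Relation.reflTransGen_eq_self.le _ _ (h.lift f hf)

/-- The finiteness hypotheses matter: `toReal` sends `⊤` to `0`. -/
lemma volume_le_of_uniform_of_not_envy {val : Set ℝ → ℝ} {A B : Set ℝ}
    (hvalA : val A = (volume A).toReal) (hvalB : val B = (volume B).toReal)
    (hA : volume A ≠ ⊤) (hB : volume B ≠ ⊤) (hnoenvy : val B ≤ val A) :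
    volume B ≤ volume A := by
  rw [hvalA, hvalB] at hnoenvy
  exact (ENNReal.toReal_le_toReal hB hA).mp hnoenvy

/-- In the lower-bound construction, suppose all agents of `S` have uniform
(Lebesgue) valuations on `[0,1]` and the allocation is locally envy-free on `G`.
If `j` is connected to `i` by a path all of whose vertices after `i` lie in `S`,
then the Lebesgue measure of `j`'s piece is at least that of `i`'s piece. -/
theorem measures_nondecreasing_along_path
    {V : Type*} (G : SimpleGraph V) (S : Set V)
    (v : V → Set ℝ → ℝ) (A : V → Set ℝ)
    (hsub : ∀ u, A u ⊆ Set.Icc (0:ℝ) 1)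
    (hunif : ∀ s ∈ S, ∀ u, v s (A u) = (MeasureTheory.volume (A u)).toReal)
    (hlef : ∀ a b, G.Adj a b → v a (A b) ≤ v a (A a))
    (i j : V)
    (hpath : Relation.ReflTransGen (fun a b => G.Adj a b ∧ b ∈ S) i j) :
    MeasureTheory.volume (A i) ≤ MeasureTheory.volume (A j) := by
  have hfin : ∀ u, volume (A u) ≠ ⊤ := fun u => volume_ne_top_of_subset_Icc (hsub u)
  refine hpath.le_of_monotone (f := fun u => volume (A u)) fun a b ⟨hadj, hb⟩ => ?_
  exact volume_le_of_uniform_of_not_envy (hunif b hb b) (hunif b hb a) (hfin b) (hfin a)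
    (hlef b a hadj.symm)
end

section
/- If a connected undirected graph G contains a (k,ε)-linked subpartition, then it contains a (k,ε)-linked partition. -/
/-- A `(k, ε)`-linked subpartition of a graph `G`: a set `L` of at least `k`
vertices together with pairwise disjoint subsets `S i ⊆ V \ L` for `i ∈ L`, each
of size at least `ε·n/k - 1`, such that every `j ∈ S i` is reachable from `i` by
a path avoiding `L` except at its start `i`. -/
def LinkedSubpartition {V : Type*} [Fintype V] (G : SimpleGraph V) (k : ℕ) (ε : ℝ)
    (L : Finset V) (S : V → Finset V) : Prop :=
  k ≤ L.card ∧
  (∀ i ∈ L, ∀ x ∈ S i, x ∉ L) ∧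
  (∀ i ∈ L, ∀ i' ∈ L, i ≠ i' → Disjoint (S i) (S i')) ∧
  (∀ i ∈ L, ε * (Fintype.card V : ℝ) / k - 1 ≤ ((S i).card : ℝ)) ∧
  (∀ i ∈ L, ∀ j ∈ S i, Relation.ReflTransGen (fun a b => G.Adj a b ∧ b ∉ L) i j)

/-- A `(k, ε)`-linked partition: as a subpartition, but `L` has size exactly `k`
and the sets `{S i : i ∈ L}` partition all of `V \ L`. -/
def LinkedPartition {V : Type*} [Fintype V] (G : SimpleGraph V) (k : ℕ) (ε : ℝ)
    (L : Finset V) (S : V → Finset V) : Prop :=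
  L.card = k ∧
  (∀ i ∈ L, ∀ x ∈ S i, x ∉ L) ∧
  (∀ i ∈ L, ∀ i' ∈ L, i ≠ i' → Disjoint (S i) (S i')) ∧
  (∀ x, x ∉ L → ∃ i ∈ L, x ∈ S i) ∧
  (∀ i ∈ L, ε * (Fintype.card V : ℝ) / k - 1 ≤ ((S i).card : ℝ)) ∧
  (∀ i ∈ L, ∀ j ∈ S i, Relation.ReflTransGen (fun a b => G.Adj a b ∧ b ∉ L) i j)

/-- If a connected graph contains a `(k, ε)`-linked subpartition, then it contains
a `(k, ε)`-linked partition. -/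
theorem linked_subpartition_to_partition
    {V : Type*} [Fintype V] [DecidableEq V] (G : SimpleGraph V) (hG : G.Connected)
    (k : ℕ) (hk : 1 ≤ k) (ε : ℝ) (hε : 0 < ε) (hε1 : ε ≤ 1)
    (h : ∃ L S, LinkedSubpartition G k ε L S) :
    ∃ L S, LinkedPartition G k ε L S := by
  classical
  obtain ⟨L, S, hcard, hS1, hS2, hS3, hS4⟩ := h
  obtain ⟨L', hL'sub, hL'card⟩ := Finset.exists_subset_card_eq hcard
  have hL'ne : L'.Nonempty := Finset.card_pos.mp (by omega)
  obtain ⟨i0, hi0⟩ := hL'ne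
  -- every vertex is reachable from some i ∈ L' by a path avoiding L' after its start
  have key : ∀ x : V, ∃ i ∈ L', Relation.ReflTransGen (fun a b => G.Adj a b ∧ b ∉ L') i x := by
    intro x
    by_cases hx : x ∈ L'
    · exact ⟨x, hx, Relation.ReflTransGen.refl⟩
    · have hreach : Relation.ReflTransGen G.Adj i0 x :=
        (SimpleGraph.reachable_iff_reflTransGen i0 x).mp (hG.preconnected i0 x)
      clear hx
      induction hreach with
      | refl => exact ⟨i0, hi0, Relation.ReflTransGen.refl⟩
      | tail hab hadj ih =>
        rename_i b c
        by_cases hc : c ∈ L'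
        · exact ⟨c, hc, Relation.ReflTransGen.refl⟩
        · obtain ⟨i, hiL, hi⟩ := ih
          exact ⟨i, hiL, hi.tail ⟨hadj, hc⟩⟩
  choose f hf1 hf2 using key
  refine ⟨L', fun i => S i ∪ Finset.univ.filter
      (fun x => x ∉ L' ∧ (∀ j ∈ L', x ∉ S j) ∧ f x = i), hL'card, ?_, ?_, ?_, ?_, ?_⟩
  · intro i hi x hx
    rcases Finset.mem_union.mp hx with hx | hx
    · exact fun hxL' => hS1 i (hL'sub hi) x hx (hL'sub hxL')
    · exact (Finset.mem_filter.mp hx).2.1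
  · intro i hi i' hi' hne
    rw [Finset.disjoint_left]
    intro x hx hx'
    rcases Finset.mem_union.mp hx with hx | hx <;>
      rcases Finset.mem_union.mp hx' with hx' | hx'
    · exact (Finset.disjoint_left.mp (hS2 i (hL'sub hi) i' (hL'sub hi') hne) hx) hx'
    · exact (Finset.mem_filter.mp hx').2.2.1 i hi hx
    · exact (Finset.mem_filter.mp hx).2.2.1 i' hi' hx'
    · exact hne ((Finset.mem_filter.mp hx).2.2.2.symm.trans (Finset.mem_filter.mp hx').2.2.2)
  · intro x hx
    by_cases hxs : ∃ j ∈ L', x ∈ S j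
    · obtain ⟨j, hj, hxj⟩ := hxs
      exact ⟨j, hj, Finset.mem_union.mpr (Or.inl hxj)⟩
    · push_neg at hxs
      exact ⟨f x, hf1 x, Finset.mem_union.mpr (Or.inr (Finset.mem_filter.mpr
        ⟨Finset.mem_univ x, hx, hxs, rfl⟩))⟩
  · intro i hi
    refine le_trans (hS3 i (hL'sub hi)) ?_
    exact_mod_cast Finset.card_le_card (Finset.subset_union_left)
  · intro i hi j hj
    rcases Finset.mem_union.mp hj with hj | hj
    · exact Relation.ReflTransGen.mono (p := fun a b => G.Adj a b ∧ b ∉ L')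
        (fun a b hab => ⟨hab.1, fun hb => hab.2 (hL'sub hb)⟩) i j (hS4 i (hL'sub hi) j hj)
    · rw [← (Finset.mem_filter.mp hj).2.2.2]
      exact hf2 j
end
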